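/- arXiv:1807.03828 — 4 statements merged into one kernel-verified Lean document; each statement's English description precedes it below -/
import Mathlib

section
/- Let S(t) be the translation semigroup on BUC(ℝ⁺, X), M a closed subspace of BUC(ℝ⁺, X) invariant under all S(t), and Y the quotient space. For every f ∈ BUC(ℝ⁺, X), every t > 0, and every g ∈ M, define h(s) = g(s−t) for s ≥ t and h(s) = g(0) + f(s) − f(t) for 0 ≤ s < t. If h ∈ M, then ‖f − h‖_∞ = ‖S(t)f − g‖_∞; consequently (when M is admissible, so that h ∈ M always holds) ‖[f]‖ ≤ ‖[S(t)f]‖ in the quotient norm, and combined with contractivity, the induced semigroup S̄(t) consists of isometries of Y. -/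
open scoped NNReal
open BoundedContinuousFunction Filter MeasureTheory intervalIntegral Topology

noncomputable section

variable (X : Type*) [NormedAddCommGroup X] [NormedSpace ℂ X]

/-- `BUC(ℝ⁺, X)` as a submodule of the bounded continuous functions on `ℝ≥0`. -/
def BUCplus : Submodule ℂ (BoundedContinuousFunction ℝ≥0 X) where
  carrier := {f | UniformContinuous f}
  add_mem' {f g} hf hg := by
    show UniformContinuous ⇑(f + g)
    rw [BoundedContinuousFunction.coe_add]; exact hf.add hg
  zero_mem' := by
    show UniformContinuous ⇑(0 : BoundedContinuousFunction ℝ≥0 X)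
    rw [BoundedContinuousFunction.coe_zero]; exact uniformContinuous_const
  smul_mem' c f hf := by
    show UniformContinuous ⇑(c • f)
    rw [BoundedContinuousFunction.coe_smul]; exact hf.const_smul c

variable {X}

lemma uc_shift (t : ℝ≥0) : UniformContinuous fun ξ : ℝ≥0 => ξ + t := by
  have : Isometry fun ξ : ℝ≥0 => ξ + t :=
    Isometry.of_dist_eq fun a b => by simp [NNReal.dist_eq]
  exact this.uniformContinuous

def shiftMap (t : ℝ≥0) : C(ℝ≥0, ℝ≥0) := ⟨fun ξ => ξ + t, (uc_shift t).continuous⟩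

/-- The translation semigroup `(S(t)x)(ξ) = x(t + ξ)` on `BUC(ℝ⁺, X)`. -/
def Strans (t : ℝ≥0) : ↥(BUCplus X) →ₗ[ℂ] ↥(BUCplus X) where
  toFun f := ⟨f.1.compContinuous (shiftMap t), UniformContinuous.comp f.2 (uc_shift t)⟩
  map_add' f g := by apply Subtype.ext; ext ξ; rfl
  map_smul' c f := by apply Subtype.ext; ext ξ; rfl

/-- `f : ℝ → X` is almost periodic in Bohr's sense. -/
def AlmostPeriodic (f : ℝ → X) : Prop :=
  Continuous f ∧ ∀ ε > (0 : ℝ), ∃ l > (0 : ℝ), ∀ a : ℝ,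
    ∃ τ ∈ Set.Icc a (a + l), ∀ t : ℝ, ‖f (t + τ) - f t‖ ≤ ε

/-- The Bohr spectrum of `f` : the set of reals `λ` whose Fourier coefficient
`a(λ, f) = lim_{T→∞} (1/2T) ∫_{-T}^{T} e^{-iλt} f(t) dt` is different from `0`. -/
def BohrSpectrum (f : ℝ → X) : Set ℝ :=
  {l | ∃ a : X, a ≠ 0 ∧
    Tendsto (fun T : ℝ => (2 * T)⁻¹ •
      ∫ t in (-T)..T, (Complex.exp (-(Complex.I * l * t))) • f t) atTop (𝓝 a)}

/-- `AP⁺_Λ(X)` : restrictions to the half line of almost periodic functions with Bohr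
spectrum contained in `Λ`. -/
def APplusLam (Λ : Set ℝ) : Set ↥(BUCplus X) :=
  {h | ∃ f : ℝ → X, AlmostPeriodic f ∧ BohrSpectrum f ⊆ Λ ∧ ∀ s : ℝ≥0, h.1 s = f s}

/-- `C₀(X)` : the functions in `BUC(ℝ⁺, X)` vanishing at infinity. -/
def Czero : Set ↥(BUCplus X) :=
  {h | Tendsto (fun s : ℝ≥0 => h.1 s) atTop (𝓝 0)}

/-- A subspace `M` of `BUC(ℝ⁺, X)` is admissible if `M = AP⁺_Λ(X) ⊕ C₀(X)` for some
closed set `Λ ⊆ ℝ`. -/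
def IsAdmissible (M : Submodule ℂ ↥(BUCplus X)) : Prop :=
  ∃ Λ : Set ℝ, IsClosed Λ ∧
    ∀ h : ↥(BUCplus X), h ∈ M ↔ ∃ a ∈ APplusLam (X := X) Λ, ∃ b ∈ Czero (X := X), h = a + b

/-!
Write `g ∈ M` as `a + b` with `a` the restriction of an almost periodic `F` with Bohr spectrum in
`Λ` and `b ∈ C₀`. A function in `BUC` that eventually agrees with `g (· - c)` is the restriction of
`F (· - c)` plus a function vanishing at infinity, and `F (· - c)` has the spectrum of `F` because
Bohr means are asymptotically translation invariant; so it lies in `M`. This yields both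
`S(t) M ⊆ M` and `h ∈ M`. The values of `f - h` are those of `S(t)f - g` (on `[0, t)` it is the
constant `(S(t)f - g)(0)`), so `‖f - h‖ = ‖S(t)f - g‖`, and taking the infimum over `g` gives
`‖[f]‖ ≤ ‖[S(t)f]‖`; the reverse inequality holds because `S(t)` is a contraction leaving `M`
invariant.
-/

theorem Submodule.Quotient.norm_mk_le_norm_mk {R E : Type*} [Ring R] [SeminormedAddCommGroup E]
    [Module R E] {M : Submodule R E} {x y : E} (H : ∀ g ∈ M, ∃ h ∈ M, ‖x - h‖ ≤ ‖y - g‖) :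
    ‖(Submodule.Quotient.mk x : E ⧸ M)‖ ≤ ‖(Submodule.Quotient.mk y : E ⧸ M)‖ := by
  rw [show ‖(Submodule.Quotient.mk x : E ⧸ M)‖ = Metric.infDist x M from
      QuotientAddGroup.norm_mk (S := M.toAddSubgroup) x,
    show ‖(Submodule.Quotient.mk y : E ⧸ M)‖ = Metric.infDist y M from
      QuotientAddGroup.norm_mk (S := M.toAddSubgroup) y]
  refine (Metric.le_infDist ⟨0, M.zero_mem⟩).2 fun g hg => ?_
  obtain ⟨h, hh, hle⟩ := H g hg
  calc Metric.infDist x M ≤ dist x h := Metric.infDist_le_dist_of_mem hh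
    _ ≤ dist y g := by rwa [dist_eq_norm, dist_eq_norm]

section BohrMean

variable {E : Type*} [NormedAddCommGroup E] [NormedSpace ℂ E]

def bohrMean (G : ℝ → E) (T : ℝ) : E := (2 * T)⁻¹ • ∫ s in (-T)..T, G s

theorem tendsto_bohrMean_comp_sub_sub_bohrMean {G : ℝ → E} (hG : Continuous G) {C : ℝ}
    (hC : ∀ r, ‖G r‖ ≤ C) (c : ℝ) :
    Tendsto (fun T => bohrMean (fun s => G (s - c)) T - bohrMean G T) atTop (𝓝 0) := by
  have hdiff : ∀ T, bohrMean (fun s => G (s - c)) T - bohrMean G T =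
      (2 * T)⁻¹ • ((∫ s in (-T - c)..(-T), G s) - ∫ s in (T - c)..T, G s) := fun T => by
    rw [bohrMean, bohrMean, ← smul_sub, intervalIntegral.integral_comp_sub_right,
      intervalIntegral.integral_interval_sub_interval_comm (hG.intervalIntegrable _ _)
        (hG.intervalIntegrable _ _) (hG.intervalIntegrable _ _)]
  have hends : ∀ T, ‖(∫ s in (-T - c)..(-T), G s) - ∫ s in (T - c)..T, G s‖ ≤ 2 * (C * |c|) := by
    intro T
    have h₁ := intervalIntegral.norm_integral_le_of_norm_le_const (a := -T - c) (b := -T)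
      fun s _ => hC s
    have h₂ := intervalIntegral.norm_integral_le_of_norm_le_const (a := T - c) (b := T)
      fun s _ => hC s
    rw [show -T - (-T - c) = c by ring] at h₁
    rw [show T - (T - c) = c by ring] at h₂
    linarith [norm_sub_le (∫ s in (-T - c)..(-T), G s) (∫ s in (T - c)..T, G s)]
  have hinv : Tendsto (fun T : ℝ => |(2 * T)⁻¹| * (2 * (C * |c|))) atTop (𝓝 0) := by
    simpa using ((tendsto_inv_atTop_zero.comp
      (tendsto_id.const_mul_atTop two_pos)).abs).mul_const (2 * (C * |c|))
  refine squeeze_zero_norm (fun T => ?_) hinv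
  rw [hdiff, norm_smul, Real.norm_eq_abs]
  exact mul_le_mul_of_nonneg_left (hends T) (abs_nonneg _)

theorem bohrSpectrum_comp_sub_subset {F : ℝ → E} (hF : Continuous F) {C : ℝ}
    (hC : ∀ r, ‖F r‖ ≤ C) (c : ℝ) : BohrSpectrum (fun r => F (r - c)) ⊆ BohrSpectrum F := by
  rintro l ⟨a, ha, hlim⟩
  set e : ℝ → ℂ := fun u => Complex.exp (-(Complex.I * l * u))
  have he : ∀ u v, e (u + v) = e u * e v := fun u v => by
    simp only [e, ← Complex.exp_add]; push_cast; ring_nf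
  have hnorm : ∀ u, ‖e u • F u‖ ≤ C := fun u => by
    simpa [e, norm_smul, Complex.norm_exp] using hC u
  have hcont : Continuous fun u => e u • F u := by fun_prop
  have hshift : ∀ T, (2 * T)⁻¹ • ∫ s in (-T)..T, e s • F (s - c) =
      e c • bohrMean (fun s => e (s - c) • F (s - c)) T := fun T => by
    rw [bohrMean, smul_comm (e c), ← intervalIntegral.integral_smul (e c)]
    congr 1
    refine intervalIntegral.integral_congr fun s _ => ?_
    rw [smul_smul, ← he, add_sub_cancel]
  have hlim' : Tendsto (bohrMean fun s => e (s - c) • F (s - c)) atTop (𝓝 ((e c)⁻¹ • a)) := by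
    refine (hlim.const_smul (e c)⁻¹).congr fun T => ?_
    rw [hshift, inv_smul_smul₀ (Complex.exp_ne_zero _)]
  refine ⟨(e c)⁻¹ • a, smul_ne_zero (inv_ne_zero (Complex.exp_ne_zero _)) ha, ?_⟩
  have := hlim'.sub (tendsto_bohrMean_comp_sub_sub_bohrMean hcont hnorm c)
  simp only [sub_sub_cancel, sub_zero] at this
  exact this

end BohrMean

section AlmostPeriodic

variable {E : Type*} [NormedAddCommGroup E] {F : ℝ → E}

theorem AlmostPeriodic.exists_norm_le (hF : AlmostPeriodic F) : ∃ C, ∀ r, ‖F r‖ ≤ C := by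
  obtain ⟨l, -, H⟩ := hF.2 1 one_pos
  obtain ⟨C, hC⟩ :=
    isCompact_Icc.exists_bound_of_continuousOn (hF.1.continuousOn (s := Set.Icc 0 l))
  refine ⟨C + 1, fun r => ?_⟩
  obtain ⟨τ, hτ, hτ'⟩ := H (-r)
  have hmem : r + τ ∈ Set.Icc 0 l := ⟨by linarith [hτ.1], by linarith [hτ.2]⟩
  calc ‖F r‖ = ‖F (r + τ) - (F (r + τ) - F r)‖ := by rw [sub_sub_cancel]
    _ ≤ ‖F (r + τ)‖ + ‖F (r + τ) - F r‖ := norm_sub_le _ _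
    _ ≤ C + 1 := add_le_add (hC _ hmem) (hτ' r)

theorem AlmostPeriodic.uniformContinuous (hF : AlmostPeriodic F) : UniformContinuous F := by
  rw [Metric.uniformContinuous_iff]
  intro ε hε
  obtain ⟨l, -, H⟩ := hF.2 (ε / 3) (by positivity)
  obtain ⟨δ, hδ, hδ'⟩ := Metric.uniformContinuousOn_iff.1
    ((isCompact_Icc (a := -1) (b := l + 1)).uniformContinuousOn_of_continuous hF.1.continuousOn)
    (ε / 3) (by positivity)
  refine ⟨min δ 1, by positivity, fun {a b} hab => ?_⟩
  obtain ⟨τ, hτ, hτ'⟩ := H (-a)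
  obtain ⟨hab₁, hab₂⟩ := abs_lt.1 (Real.dist_eq a b ▸ hab.trans_le (min_le_right _ _))
  have ha : a + τ ∈ Set.Icc (-1) (l + 1) := ⟨by linarith [hτ.1], by linarith [hτ.2]⟩
  have hb : b + τ ∈ Set.Icc (-1) (l + 1) := ⟨by linarith [hτ.1], by linarith [hτ.2]⟩
  have hmid : dist (F (a + τ)) (F (b + τ)) < ε / 3 := hδ' _ ha _ hb <| by
    rw [Real.dist_eq, add_sub_add_right_eq_sub, ← Real.dist_eq]
    exact hab.trans_le (min_le_left _ _)
  have hleft : dist (F a) (F (a + τ)) ≤ ε / 3 := by rw [dist_comm, dist_eq_norm]; exact hτ' a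
  have hright : dist (F (b + τ)) (F b) ≤ ε / 3 := by rw [dist_eq_norm]; exact hτ' b
  linarith [dist_triangle4 (F a) (F (a + τ)) (F (b + τ)) (F b)]

theorem AlmostPeriodic.comp_sub (hF : AlmostPeriodic F) (c : ℝ) :
    AlmostPeriodic fun r => F (r - c) := by
  refine ⟨hF.1.comp (continuous_sub_right c), fun ε hε => ?_⟩
  obtain ⟨l, hl, H⟩ := hF.2 ε hε
  refine ⟨l, hl, fun a => ?_⟩
  obtain ⟨τ, hτ, hτ'⟩ := H a
  exact ⟨τ, hτ, fun u => by simpa only [sub_add_eq_add_sub] using hτ' (u - c)⟩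

end AlmostPeriodic

def BUCplus.comp (f : ↥(BUCplus X)) (φ : ℝ≥0 → ℝ≥0) (hφ : UniformContinuous φ) :
    ↥(BUCplus X) :=
  ⟨f.1.compContinuous ⟨φ, hφ.continuous⟩, f.2.comp hφ⟩

def BUCplus.const (x : X) : ↥(BUCplus X) :=
  ⟨BoundedContinuousFunction.const ℝ≥0 x, uniformContinuous_const⟩

theorem AlmostPeriodic.exists_restrict {F : ℝ → X} (hF : AlmostPeriodic F) :
    ∃ a : ↥(BUCplus X), ∀ s : ℝ≥0, a.1 s = F s := by
  obtain ⟨C, hC⟩ := hF.exists_norm_le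
  have hUC : UniformContinuous fun s : ℝ≥0 => F s :=
    hF.uniformContinuous.comp NNReal.isometry_coe.uniformContinuous
  exact ⟨⟨.ofNormedAddCommGroup _ hUC.continuous C fun s => hC s, hUC⟩, fun s => rfl⟩

theorem mem_Czero_of_eventually_eq_comp {b m : ↥(BUCplus X)} (hb : b ∈ Czero (X := X))
    {φ : ℝ≥0 → ℝ≥0} (hφ : Tendsto φ atTop atTop) (hm : ∀ᶠ s in atTop, m.1 s = b.1 (φ s)) :
    m ∈ Czero (X := X) :=
  (hb.comp hφ).congr' (hm.mono fun _ hs => hs.symm)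

theorem norm_strans_le (t : ℝ≥0) (x : ↥(BUCplus X)) : ‖Strans t x‖ ≤ ‖x‖ :=
  (BoundedContinuousFunction.norm_le (norm_nonneg x.1)).2 fun ξ => x.1.norm_coe_le_norm (ξ + t)

namespace IsAdmissible

variable {M : Submodule ℂ ↥(BUCplus X)}

theorem mem_of_eventually_eq_shift (hM : IsAdmissible M) {g h : ↥(BUCplus X)} (hg : g ∈ M)
    (c : ℝ) (hh : ∀ᶠ s : ℝ≥0 in atTop, h.1 s = g.1 (Real.toNNReal (s - c))) : h ∈ M := by
  obtain ⟨Λ, -, hiff⟩ := hM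
  obtain ⟨a, ⟨F, hF, hFΛ, hFa⟩, b, hb, rfl⟩ := (hiff g).1 hg
  obtain ⟨C, hC⟩ := hF.exists_norm_le
  obtain ⟨a', ha'⟩ := (hF.comp_sub c).exists_restrict
  have hφ : Tendsto (fun s : ℝ≥0 => Real.toNNReal (s - c)) atTop atTop :=
    Real.tendsto_toNNReal_atTop.comp <| by
      simpa only [sub_eq_add_neg, id] using
        tendsto_atTop_add_const_right _ (-c) (NNReal.tendsto_coe_atTop.2 tendsto_id)
  have hb' : h - a' ∈ Czero (X := X) := by
    refine mem_Czero_of_eventually_eq_comp hb hφ ?_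
    filter_upwards [hh, eventually_ge_atTop c.toNNReal] with s hs hcs
    have hF' : a.1 (Real.toNNReal (s - c)) = F (s - c) := by
      rw [hFa, Real.coe_toNNReal _ (sub_nonneg.2 (Real.toNNReal_le_iff_le_coe.1 hcs))]
    change h.1 s - a'.1 s = b.1 _
    rw [hs, ha', ← hF']
    exact add_sub_cancel_left _ _
  exact (hiff h).2 ⟨a', ⟨_, hF.comp_sub c, (bohrSpectrum_comp_sub_subset hF.1 hC c).trans hFΛ,
    ha'⟩, h - a', hb', by abel⟩

theorem strans_mem (hM : IsAdmissible M) (t : ℝ≥0) {g : ↥(BUCplus X)} (hg : g ∈ M) :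
    Strans t g ∈ M :=
  hM.mem_of_eventually_eq_shift hg (-t) <| .of_forall fun s => by
    change g.1 (s + t) = _
    rw [sub_neg_eq_add, ← NNReal.coe_add, Real.toNNReal_coe]

end IsAdmissible

theorem uniformContinuous_tsub_const (t : ℝ≥0) : UniformContinuous fun s : ℝ≥0 => s - t :=
  NNReal.lipschitzWith_sub.uniformContinuous.comp
    (uniformContinuous_id.prodMk uniformContinuous_const)

/-- `s - (s - t) = min s t`, written so that its uniform continuity is immediate. -/
def extendBack (t : ℝ≥0) (f g : ↥(BUCplus X)) : ↥(BUCplus X) :=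
  BUCplus.comp g (· - t) (uniformContinuous_tsub_const t) +
    BUCplus.comp f (fun s => s - (s - t)) (NNReal.lipschitzWith_sub.uniformContinuous.comp
      (uniformContinuous_id.prodMk (uniformContinuous_tsub_const t))) -
    BUCplus.const (f.1 t)

theorem extendBack_apply (t : ℝ≥0) (f g : ↥(BUCplus X)) (s : ℝ≥0) :
    (extendBack t f g).1 s =
      if t ≤ s then g.1 (s - t) else g.1 0 + f.1 s - f.1 t := by
  change g.1 (s - t) + f.1 (s - (s - t)) - f.1 t = _
  split_ifs with hts
  · rw [tsub_tsub_cancel_of_le hts, add_sub_cancel_right]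
  · rw [tsub_eq_zero_of_le (not_le.1 hts).le, tsub_zero]

theorem norm_sub_extendBack (t : ℝ≥0) (f g : ↥(BUCplus X)) :
    ‖f - extendBack t f g‖ = ‖Strans t f - g‖ := by
  set u := (f - extendBack t f g).1
  set v := (Strans t f - g).1
  have hu : ∀ s, u s = f.1 s - (extendBack t f g).1 s := fun s => rfl
  have hvu : ∀ ξ, v ξ = u (ξ + t) := fun ξ => by
    rw [hu, extendBack_apply, if_pos le_add_self, add_tsub_cancel_right]; rfl
  have huv : ∀ s, ∃ ξ, u s = v ξ := fun s => by
    by_cases hts : t ≤ s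
    · exact ⟨s - t, by rw [hvu, tsub_add_cancel_of_le hts]⟩
    · refine ⟨0, ?_⟩
      rw [hvu, hu, hu, extendBack_apply, extendBack_apply, if_neg hts, zero_add, if_pos le_rfl,
        tsub_self]
      abel
  change ‖u‖ = ‖v‖
  refine le_antisymm ((BoundedContinuousFunction.norm_le (norm_nonneg v)).2 fun s => ?_)
    ((BoundedContinuousFunction.norm_le (norm_nonneg u)).2 fun ξ => hvu ξ ▸ u.norm_coe_le_norm _)
  obtain ⟨ξ, hξ⟩ := huv s
  exact hξ ▸ v.norm_coe_le_norm ξ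

theorem IsAdmissible.extendBack_mem {M : Submodule ℂ ↥(BUCplus X)} (hM : IsAdmissible M)
    (t : ℝ≥0) (f : ↥(BUCplus X)) {g : ↥(BUCplus X)} (hg : g ∈ M) : extendBack t f g ∈ M :=
  hM.mem_of_eventually_eq_shift hg t <| by
    filter_upwards [eventually_ge_atTop t] with s hs
    rw [extendBack_apply, if_pos hs, NNReal.sub_def]

theorem induced_translation_isometric_general
    {X : Type*} [NormedAddCommGroup X] [NormedSpace ℂ X]
    (M : Submodule ℂ ↥(BUCplus X)) (hM : IsAdmissible M)
    (t : ℝ≥0) (f g : ↥(BUCplus X)) (hg : g ∈ M)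
    (h : ↥(BUCplus X))
    (hspec : ∀ s : ℝ≥0, (h.1 : ℝ≥0 → X) s =
      if t ≤ s then (g.1 : ℝ≥0 → X) (s - t)
      else (g.1 : ℝ≥0 → X) 0 + (f.1 : ℝ≥0 → X) s - (f.1 : ℝ≥0 → X) t) :
    h ∈ M ∧
    ‖f - h‖ = ‖Strans t f - g‖ ∧
    ‖(Submodule.Quotient.mk f : ↥(BUCplus X) ⧸ M)‖ ≤
      ‖(Submodule.Quotient.mk (Strans t f) : ↥(BUCplus X) ⧸ M)‖ ∧
    ‖(Submodule.Quotient.mk (Strans t f) : ↥(BUCplus X) ⧸ M)‖ =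
      ‖(Submodule.Quotient.mk f : ↥(BUCplus X) ⧸ M)‖ := by
  obtain rfl : h = extendBack t f g :=
    Subtype.ext <| BoundedContinuousFunction.ext fun s =>
      (hspec s).trans (extendBack_apply t f g s).symm
  have hle : ‖(Submodule.Quotient.mk f : ↥(BUCplus X) ⧸ M)‖ ≤
      ‖(Submodule.Quotient.mk (Strans t f) : ↥(BUCplus X) ⧸ M)‖ :=
    Submodule.Quotient.norm_mk_le_norm_mk fun g' hg' =>
      ⟨extendBack t f g', hM.extendBack_mem t f hg', (norm_sub_extendBack t f g').le⟩
  have hge : ‖(Submodule.Quotient.mk (Strans t f) : ↥(BUCplus X) ⧸ M)‖ ≤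
      ‖(Submodule.Quotient.mk f : ↥(BUCplus X) ⧸ M)‖ :=
    Submodule.Quotient.norm_mk_le_norm_mk fun g' hg' =>
      ⟨Strans t g', hM.strans_mem t hg', by rw [← map_sub]; exact norm_strans_le t _⟩
  exact ⟨hM.extendBack_mem t f hg, norm_sub_extendBack t f g, hle, le_antisymm hge hle⟩

/-- Let `M` be an admissible subspace of `BUC(ℝ⁺, X)` (it is invariant under all
translations `S(t)`), `f ∈ BUC(ℝ⁺, X)`, `t > 0`, `g ∈ M`, and let `h` be the function
defined by `h(s) = g(s - t)` for `s ≥ t` and `h(s) = g(0) + f(s) - f(t)` for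
`0 ≤ s < t`.  Then `h ∈ M`, `‖f - h‖_∞ = ‖S(t)f - g‖_∞`; consequently
`‖[f]‖ ≤ ‖[S(t)f]‖` in the quotient norm and, combined with contractivity, the
induced semigroup `S̄(t)` consists of isometries of `Y = BUC(ℝ⁺, X)/M`. -/
theorem induced_translation_isometric
    {X : Type*} [NormedAddCommGroup X] [NormedSpace ℂ X]
    (M : Submodule ℂ ↥(BUCplus X)) (hM : IsAdmissible M)
    (t : ℝ≥0) (ht : 0 < t) (f g : ↥(BUCplus X)) (hg : g ∈ M)
    (h : ↥(BUCplus X))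
    (hspec : ∀ s : ℝ≥0, (h.1 : ℝ≥0 → X) s =
      if t ≤ s then (g.1 : ℝ≥0 → X) (s - t)
      else (g.1 : ℝ≥0 → X) 0 + (f.1 : ℝ≥0 → X) s - (f.1 : ℝ≥0 → X) t) :
    h ∈ M ∧
    ‖f - h‖ = ‖Strans t f - g‖ ∧
    ‖(Submodule.Quotient.mk f : ↥(BUCplus X) ⧸ M)‖ ≤
      ‖(Submodule.Quotient.mk (Strans t f) : ↥(BUCplus X) ⧸ M)‖ ∧
    ‖(Submodule.Quotient.mk (Strans t f) : ↥(BUCplus X) ⧸ M)‖ =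
      ‖(Submodule.Quotient.mk f : ↥(BUCplus X) ⧸ M)‖ :=
  induced_translation_isometric_general M hM t f g hg h hspec

end
end

section
/- Let T be an invertible isometry of a complex Banach space Y and y ∈ Y. If ξ₀ on the unit circle is an isolated singular point of the analytic function λ ↦ R(λ, T)y, then ξ₀ is either a removable singularity or a pole of order one. -/
/-!
Put `F(λ) = (λ - ξ₀) R(λ, T) y`. Since `T` is an isometry, `|‖λ‖ - 1| ‖R(λ, T) y‖ ≤ ‖y‖`, so
`|‖λ‖² - 1| ‖F λ‖ = O(‖λ - ξ₀‖)`. The factor `‖λ‖² - 1` vanishes on the unit circle, which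
cuts every small disc around a point `v` near `ξ₀`, so this bound alone does not control `F`.
On the circle `‖z - v‖ = ρ`, however, `conj z = conj v + ρ² / (z - v)`, so `‖z‖² - 1` agrees
there with a meromorphic function; multiplied by `v (z - v)` it becomes a polynomial `q`.
The maximum modulus principle applied to `q • F` on the disc of radius `‖v - ξ₀‖ / 2` bounds
`F v` uniformly, and Riemann's removable singularity theorem finishes the proof.
-/

open Metric Filter Topology

section

open Complex ComplexConjugate

theorem abs_norm_sub_one_mul_norm_le_norm_smul_sub {𝕜 E : Type*} [NormedField 𝕜]
    [SeminormedAddCommGroup E] [NormedSpace 𝕜 E] (T : E →ₗᵢ[𝕜] E) (l : 𝕜) (x : E) :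
    |‖l‖ - 1| * ‖x‖ ≤ ‖l • x - T x‖ := by
  calc |‖l‖ - 1| * ‖x‖ = |‖l • x‖ - ‖T x‖| := by
        rw [norm_smul, T.norm_map, ← abs_of_nonneg (norm_nonneg x), ← abs_mul, sub_one_mul,
          abs_of_nonneg (norm_nonneg x)]
    _ ≤ ‖l • x - T x‖ := abs_norm_sub_norm_le _ _

theorem sub_mul_mul_conj_sub_one_add_sq_mul {v z : ℂ} {ρ : ℝ} (hz : ‖z - v‖ = ρ) :
    (z - v) * (z * conj v - 1) + ρ ^ 2 * z = (z - v) * ((‖z‖ ^ 2 - 1 : ℝ) : ℂ) := by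
  have hρ : (z - v) * conj (z - v) = ((ρ ^ 2 : ℝ) : ℂ) := by
    rw [mul_conj, ← Complex.sq_norm, hz]
  have hz2 : z * conj z = ((‖z‖ ^ 2 : ℝ) : ℂ) := by
    rw [mul_conj, ← Complex.sq_norm]
  rw [map_sub] at hρ
  push_cast at hρ hz2 ⊢
  linear_combination (z - v) * hz2 - z * hρ

variable {E : Type*} [NormedAddCommGroup E] [NormedSpace ℂ E]

theorem mul_norm_mul_norm_le_of_forall_mem_sphere {F : ℂ → E} {v : ℂ} {ρ b : ℝ}
    (hρ : 0 < ρ) (hv : v ≠ 0) (hF : DifferentiableOn ℂ F (closedBall v ρ))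
    (hb : ∀ z ∈ sphere v ρ, |‖z‖ ^ 2 - 1| * ‖F z‖ ≤ b) :
    ρ * ‖v‖ * ‖F v‖ ≤ b := by
  set q : ℂ → ℂ := fun z => v * ((z - v) * (z * conj v - 1) + ρ ^ 2 * z)
  have hq_sphere : ∀ z ∈ sphere v ρ, ‖q z‖ = ρ * ‖v‖ * |‖z‖ ^ 2 - 1| := by
    intro z hz
    have hz' : ‖z - v‖ = ρ := by rwa [mem_sphere, dist_eq_norm] at hz
    simp only [q, sub_mul_mul_conj_sub_one_add_sq_mul hz', norm_mul, norm_real, Real.norm_eq_abs,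
      hz']
    ring
  have hq_center : ‖q v‖ = ρ ^ 2 * ‖v‖ ^ 2 := by
    simp only [q, sub_self, zero_mul, zero_add, norm_mul, norm_pow, norm_real, Real.norm_eq_abs,
      abs_of_pos hρ]
    ring
  have hqF : DifferentiableOn ℂ (fun z => q z • F z) (closedBall v ρ) :=
    (by fun_prop : Differentiable ℂ q).differentiableOn.smul hF
  have hmax : ‖q v • F v‖ ≤ ρ * ‖v‖ * b := by
    refine Complex.norm_le_of_forall_mem_frontier_norm_le (f := fun z => q z • F z) isBounded_ball
      (DifferentiableOn.diffContOnCl (by rwa [closure_ball v hρ.ne'])) (fun z hz => ?_)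
      (subset_closure (mem_ball_self hρ))
    rw [frontier_ball v hρ.ne'] at hz
    rw [norm_smul, hq_sphere z hz, mul_assoc]
    gcongr
    exact hb z hz
  rw [norm_smul, hq_center] at hmax
  have hρv : 0 < ρ * ‖v‖ := by positivity
  nlinarith

theorem norm_mul_norm_le_of_forall_mem_closedBall_half_dist {F : ℂ → E} {ξ₀ v : ℂ} {C : ℝ}
    (hv : v ≠ 0) (hvξ₀ : v ≠ ξ₀) (hF : DifferentiableOn ℂ F (closedBall v (‖v - ξ₀‖ / 2)))
    (hC : ∀ z ∈ closedBall v (‖v - ξ₀‖ / 2), |‖z‖ ^ 2 - 1| * ‖F z‖ ≤ C * ‖z - ξ₀‖) :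
    ‖v‖ * ‖F v‖ ≤ 3 * C := by
  set r := ‖v - ξ₀‖
  have hr : 0 < r := norm_pos_iff.2 (sub_ne_zero.2 hvξ₀)
  have hC₀ : 0 ≤ C :=
    nonneg_of_mul_nonneg_left ((by positivity : (0 : ℝ) ≤ _).trans (hC v (mem_closedBall_self
      (by positivity)))) hr
  have hsphere : ∀ z ∈ sphere v (r / 2), |‖z‖ ^ 2 - 1| * ‖F z‖ ≤ C * (3 * r / 2) := by
    intro z hz
    have hzv : ‖z - v‖ = r / 2 := by rwa [mem_sphere, dist_eq_norm] at hz
    calc |‖z‖ ^ 2 - 1| * ‖F z‖ ≤ C * ‖z - ξ₀‖ := hC z (sphere_subset_closedBall hz)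
      _ ≤ C * (‖z - v‖ + ‖v - ξ₀‖) := by gcongr; exact norm_sub_le_norm_sub_add_norm_sub z v ξ₀
      _ = C * (3 * r / 2) := by rw [hzv]; ring
  have := mul_norm_mul_norm_le_of_forall_mem_sphere (half_pos hr) hv hF hsphere
  nlinarith

theorem isBoundedUnder_norm_of_abs_sq_norm_sub_one_mul_norm_le {F : ℂ → E} {ξ₀ : ℂ} {C : ℝ}
    (hξ₀ : ξ₀ ≠ 0) (hd : ∀ᶠ z in 𝓝[≠] ξ₀, DifferentiableAt ℂ F z)
    (hC : ∀ᶠ z in 𝓝[≠] ξ₀, |‖z‖ ^ 2 - 1| * ‖F z‖ ≤ C * ‖z - ξ₀‖) :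
    IsBoundedUnder (· ≤ ·) (𝓝[≠] ξ₀) (norm ∘ F) := by
  obtain ⟨ε, hε, hsub⟩ := Metric.mem_nhdsWithin_iff.1 (hd.and hC)
  have hξ₀' : 0 < ‖ξ₀‖ := norm_pos_iff.2 hξ₀
  refine isBoundedUnder_of_eventually_le (a := 3 * C / (‖ξ₀‖ / 2)) ?_
  filter_upwards [nhdsWithin_le_nhds (ball_mem_nhds ξ₀ (lt_min (by positivity : 0 < ε / 3)
    (half_pos hξ₀'))), self_mem_nhdsWithin] with v hv (hvξ₀ : v ≠ ξ₀)
  set r := ‖v - ξ₀‖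
  have hr : r < ε / 3 ∧ r < ‖ξ₀‖ / 2 := by rwa [mem_ball, dist_eq_norm, lt_min_iff] at hv
  have hr₀ : 0 < r := norm_pos_iff.2 (sub_ne_zero.2 hvξ₀)
  have hdisc : closedBall v (r / 2) ⊆ ball ξ₀ ε ∩ {ξ₀}ᶜ := by
    intro z hz
    rw [mem_closedBall, dist_eq_norm] at hz
    have hzξ₀ := norm_sub_le_norm_sub_add_norm_sub z v ξ₀
    refine ⟨by rw [mem_ball, dist_eq_norm]; linarith, fun (hzξ : z = ξ₀) => ?_⟩
    rw [hzξ, norm_sub_rev] at hz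
    linarith
  have hv₀ : ‖ξ₀‖ / 2 ≤ ‖v‖ := by
    have := norm_sub_norm_le ξ₀ v
    rw [norm_sub_rev] at this
    linarith
  have hbound := norm_mul_norm_le_of_forall_mem_closedBall_half_dist
    (norm_pos_iff.1 ((half_pos hξ₀').trans_le hv₀)) hvξ₀
    (fun z hz => (hsub (hdisc hz)).1.differentiableWithinAt) (fun z hz => (hsub (hdisc hz)).2)
  rw [Function.comp_apply, le_div_iff₀ (by positivity)]
  nlinarith [norm_nonneg (F v)]

end

/-- Gelfand-type lemma: let `T` be an invertible isometry of a complex Banach space `Y`,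
`y ∈ Y`, and let `ξ₀` on the unit circle be an isolated singular point of the analytic
function `λ ↦ R(λ, T) y`, i.e. `g` is analytic on `U \ {ξ₀}` for some open neighborhood
`U` of `ξ₀` and coincides there with the local resolvent `R(λ, T) y` (characterized by
`(λI - T) g(λ) = y`) whenever `|λ| ≠ 1`.  Then `ξ₀` is either a removable singular point
or a pole of first order; equivalently, `λ ↦ (λ - ξ₀) g(λ)` extends analytically to `U`. -/
theorem isolated_singularity_of_local_resolvent_pole_order_one
    {Y : Type*} [NormedAddCommGroup Y] [NormedSpace ℂ Y] [CompleteSpace Y]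
    (T : Y ≃ₗᵢ[ℂ] Y) (y : Y) (ξ₀ : ℂ) (hξ₀ : ‖ξ₀‖ = 1)
    (U : Set ℂ) (hU : IsOpen U) (hξU : ξ₀ ∈ U)
    (g : ℂ → Y) (hg : DifferentiableOn ℂ g (U \ {ξ₀}))
    (hres : ∀ l ∈ U \ {ξ₀}, ‖l‖ ≠ 1 → l • g l - T (g l) = y) :
    ∃ h : ℂ → Y, DifferentiableOn ℂ h U ∧ ∀ l ∈ U \ {ξ₀}, h l = (l - ξ₀) • g l := by
  set F : ℂ → Y := fun l => (l - ξ₀) • g l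
  have hFd : DifferentiableOn ℂ F (U \ {ξ₀}) := (differentiableOn_id.sub_const ξ₀).smul hg
  have hpunct : U \ {ξ₀} ∈ 𝓝[≠] ξ₀ := sdiff_mem_nhdsWithin_compl (hU.mem_nhds hξU) _
  have hresolvent : ∀ l ∈ U \ {ξ₀}, |‖l‖ - 1| * ‖g l‖ ≤ ‖y‖ := by
    intro l hl
    rcases eq_or_ne ‖l‖ 1 with hl1 | hl1
    · simp [hl1]
    · simpa [hres l hl hl1] using
        abs_norm_sub_one_mul_norm_le_norm_smul_sub T.toLinearIsometry l (g l)
  have hnorm_lt : ∀ᶠ l in 𝓝[≠] ξ₀, ‖l‖ < 2 :=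
    nhdsWithin_le_nhds <|
      continuous_norm.continuousAt.eventually_lt continuousAt_const (by simp [hξ₀])
  have hbound : ∀ᶠ l in 𝓝[≠] ξ₀, |‖l‖ ^ 2 - 1| * ‖F l‖ ≤ 3 * ‖y‖ * ‖l - ξ₀‖ := by
    filter_upwards [hpunct, hnorm_lt] with l hl hl2
    calc |‖l‖ ^ 2 - 1| * ‖F l‖ = (‖l‖ + 1) * ‖l - ξ₀‖ * (|‖l‖ - 1| * ‖g l‖) := by
          rw [norm_smul, show ‖l‖ ^ 2 - 1 = (‖l‖ - 1) * (‖l‖ + 1) by ring, abs_mul,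
            abs_of_pos (by positivity : 0 < ‖l‖ + 1)]
          ring
      _ ≤ 3 * ‖l - ξ₀‖ * ‖y‖ := by
          gcongr
          · linarith
          · exact hresolvent l hl
      _ = 3 * ‖y‖ * ‖l - ξ₀‖ := by ring
  have hF_bdd := isBoundedUnder_norm_of_abs_sq_norm_sub_one_mul_norm_le
    (ne_zero_of_norm_ne_zero (by simp [hξ₀])) (eventually_of_mem hpunct fun l hl =>
      hFd.differentiableAt ((hU.sdiff isClosed_singleton).mem_nhds hl)) hbound
  refine ⟨Function.update F ξ₀ (limUnder (𝓝[≠] ξ₀) F), ?_,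
    fun l hl => Function.update_of_ne hl.2 _ _⟩
  refine Complex.differentiableOn_update_limUnder_of_isLittleO (hU.mem_nhds hξU) hFd ?_
  simpa [F] using hF_bdd.isLittleO_sub_self_inv
end

section
/- Let T be an invertible isometry of a complex Banach space Y, y ∈ Y, and ξ₀ ∈ Γ an isolated singular point of λ ↦ R(λ, T)y. If lim_{s↓1} (sξ₀ − ξ₀) R(sξ₀, T)y = 0 (radial limit from outside the unit circle), then ξ₀ is a removable singularity of R(λ, T)y. -/
/-!
Off the unit circle the isometry gives `||λ| - 1| ‖g λ‖ ≤ ‖y‖`, which says nothing on the circle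
itself. For `w` near `ξ₀` and `s = |w - ξ₀| / 2`, the quadratic `circleKernel w s` equals
`(|ζ|² - 1)(ζ - w)` on the circle `|ζ - w| = s` and `s² w` at its centre, so Cauchy's formula
for `circleKernel w s • g` turns the bound into `|w - ξ₀| ‖g w‖ = O(1)`, tangential directions
included: `ξ₀` is at worst a simple pole. Hence `(λ - ξ₀) g λ` extends analytically across `ξ₀`,
its value there is the radial limit `0`, and dividing by `λ - ξ₀` extends `g`.
-/

open Filter Topology
open Metric Set ComplexConjugate

theorem LinearIsometry.abs_norm_sub_one_mul_norm_le {𝕜 E : Type*} [NormedField 𝕜]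
    [NormedAddCommGroup E] [NormedSpace 𝕜 E] (T : E →ₗᵢ[𝕜] E) (l : 𝕜) (x : E) :
    |‖l‖ - 1| * ‖x‖ ≤ ‖l • x - T x‖ :=
  calc |‖l‖ - 1| * ‖x‖ = |‖l • x‖ - ‖T x‖| := by
        rw [norm_smul, T.norm_map, ← abs_of_nonneg (norm_nonneg x), ← abs_mul, abs_norm]; ring_nf
    _ ≤ ‖l • x - T x‖ := abs_norm_sub_norm_le _ _

theorem closedBall_half_dist_subset_ball_sdiff {X : Type*} [MetricSpace X] {x c : X} {r : ℝ}
    (hx : dist x c < 2 / 3 * r) (hxc : x ≠ c) :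
    closedBall x (dist x c / 2) ⊆ ball c r \ {c} := by
  intro z hz
  have hzx := mem_closedBall.1 hz
  have hxc' := dist_pos.2 hxc
  refine ⟨mem_ball.2 (by linarith [dist_triangle z x c]), fun hzc => ?_⟩
  rw [mem_singleton_iff.1 hzc, dist_comm] at hzx
  linarith

theorem Complex.tendsto_ofReal_mul_nhdsGT_one {ξ : ℂ} (hξ : ξ ≠ 0) :
    Tendsto (fun t : ℝ => (t : ℂ) * ξ) (𝓝[>] 1) (𝓝[≠] ξ) := by
  refine tendsto_nhdsWithin_iff.2 ⟨?_, ?_⟩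
  · have : Continuous fun t : ℝ => (t : ℂ) * ξ := by fun_prop
    simpa using (this.tendsto 1).mono_left nhdsWithin_le_nhds
  · filter_upwards [self_mem_nhdsWithin] with t ht
    simpa [mul_eq_right₀ hξ] using (ne_of_gt ht)

def circleKernel (w : ℂ) (s : ℝ) (ζ : ℂ) : ℂ :=
  conj w * ζ ^ 2 - (1 + w * conj w - s ^ 2) * ζ + w

theorem differentiable_circleKernel (w : ℂ) (s : ℝ) : Differentiable ℂ (circleKernel w s) := by
  unfold circleKernel; fun_prop

theorem circleKernel_self (w : ℂ) (s : ℝ) : circleKernel w s w = s ^ 2 * w := by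
  unfold circleKernel; ring

theorem circleKernel_of_mem_sphere {w ζ : ℂ} {s : ℝ} (hζ : ζ ∈ sphere w s) :
    circleKernel w s ζ = ((‖ζ‖ ^ 2 - 1 : ℝ) : ℂ) * (ζ - w) := by
  have hconj : (ζ - w) * (conj ζ - conj w) = (s : ℂ) ^ 2 := by
    rw [← map_sub, Complex.mul_conj, Complex.normSq_eq_norm_sq, ← dist_eq_norm,
      mem_sphere.1 hζ]
    push_cast; ring
  have hnorm : (‖ζ‖ : ℂ) ^ 2 = ζ * conj ζ := by
    rw [Complex.mul_conj, Complex.normSq_eq_norm_sq]; push_cast; ring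
  unfold circleKernel
  push_cast
  rw [hnorm]
  linear_combination -ζ * hconj

section

variable {Y : Type*} [NormedAddCommGroup Y] [NormedSpace ℂ Y] [CompleteSpace Y]

theorem norm_mul_mul_norm_le_of_forall_mem_sphere {g : ℂ → Y} {w : ℂ} {s M : ℝ}
    (hs : 0 < s) (hg : DifferentiableOn ℂ g (closedBall w s))
    (hM : ∀ ζ ∈ sphere w s, |‖ζ‖ - 1| * ‖g ζ‖ ≤ M) :
    ‖w‖ * s * ‖g w‖ ≤ (‖w‖ + s + 1) * M := by
  have hM0 : 0 ≤ M :=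
    (by positivity : (0 : ℝ) ≤ _).trans (hM (w + s) (by simp [abs_of_pos hs]))
  have hintegrand : ∀ ζ ∈ sphere w s,
      ‖(ζ - w)⁻¹ • (circleKernel w s ζ • g ζ)‖ ≤ (‖w‖ + s + 1) * M := by
    intro ζ hζ
    have hζw : ‖ζ - w‖ = s := by rw [← dist_eq_norm]; exact mem_sphere.1 hζ
    have hζ_le : ‖ζ‖ + 1 ≤ ‖w‖ + s + 1 := by
      linarith [norm_le_norm_add_norm_sub' ζ w]
    calc ‖(ζ - w)⁻¹ • (circleKernel w s ζ • g ζ)‖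
        = (‖ζ‖ + 1) * (|‖ζ‖ - 1| * ‖g ζ‖) := by
          rw [circleKernel_of_mem_sphere hζ, norm_smul, norm_smul, norm_mul, norm_inv, hζw,
            Complex.norm_real, Real.norm_eq_abs, show ‖ζ‖ ^ 2 - 1 = (‖ζ‖ + 1) * (‖ζ‖ - 1) by ring,
            abs_mul, abs_of_nonneg (by positivity : 0 ≤ ‖ζ‖ + 1)]
          field_simp
      _ ≤ (‖w‖ + s + 1) * M := mul_le_mul hζ_le (hM ζ hζ) (by positivity) (by positivity)
  have hcauchy := DifferentiableOn.circleIntegral_sub_inv_smul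
    (f := fun ζ => circleKernel w s ζ • g ζ)
    ((differentiable_circleKernel w s).differentiableOn.smul hg) (mem_ball_self hs)
  have hbound := circleIntegral.norm_integral_le_of_norm_le_const hs.le hintegrand
  rw [hcauchy, norm_smul, norm_smul, circleKernel_self] at hbound
  simp only [norm_mul, Complex.norm_ofNat, Complex.norm_real, Real.norm_eq_abs,
    abs_of_pos Real.pi_pos, Complex.norm_I, norm_pow, abs_of_pos hs] at hbound
  refine le_of_mul_le_mul_left ?_ (by positivity : 0 < 2 * Real.pi * s)
  linarith

theorem isBoundedUnder_norm_sub_smul_of_abs_norm_sub_one_mul_le {g : ℂ → Y} {ξ : ℂ} {r M : ℝ}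
    (hξ : ξ ≠ 0) (hr : 0 < r) (hg : DifferentiableOn ℂ g (ball ξ r \ {ξ}))
    (hM : ∀ z ∈ ball ξ r \ {ξ}, |‖z‖ - 1| * ‖g z‖ ≤ M) :
    IsBoundedUnder (· ≤ ·) (𝓝[≠] ξ) fun w => ‖(w - ξ) • g w‖ := by
  set bound : ℂ → ℝ := fun w => 2 * (‖w‖ + ‖w - ξ‖ / 2 + 1) * M / ‖w‖
  have hbound : ContinuousAt bound ξ :=
    ContinuousAt.div (by fun_prop) (by fun_prop) (norm_ne_zero_iff.2 hξ)
  refine (hbound.tendsto.mono_left nhdsWithin_le_nhds).isBoundedUnder_le.mono_le ?_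
  filter_upwards [nhdsWithin_le_nhds (ball_mem_nhds ξ (by positivity : 0 < 2 / 3 * r)),
    nhdsWithin_le_nhds (eventually_ne_nhds hξ), self_mem_nhdsWithin] with w hwr hw0 hwξ
  have hsub := closedBall_half_dist_subset_ball_sdiff hwr hwξ
  have key := norm_mul_mul_norm_le_of_forall_mem_sphere (half_pos (dist_pos.2 hwξ))
    (hg.mono hsub) fun ζ hζ => hM ζ (hsub (sphere_subset_closedBall hζ))
  rw [dist_eq_norm] at key
  rw [norm_smul, le_div_iff₀ (norm_pos_iff.2 hw0)]
  linarith

theorem exists_differentiableOn_eqOn_of_tendsto_sub_smul {f : ℂ → Y} {s : Set ℂ} {c : ℂ}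
    (hs : s ∈ 𝓝 c) (hf : DifferentiableOn ℂ f (s \ {c}))
    (hlim : Tendsto (fun z => (z - c) • f z) (𝓝[≠] c) (𝓝 0)) :
    ∃ h : ℂ → Y, DifferentiableOn ℂ h s ∧ EqOn h f (s \ {c}) := by
  have hF : DifferentiableOn ℂ (fun z => (z - c) • f z) s := by
    refine (Complex.differentiableOn_compl_singleton_and_continuousAt_iff hs).1
      ⟨(differentiableOn_id.sub_const c).smul hf, ?_⟩
    rw [← continuousWithinAt_compl_self, ContinuousWithinAt]
    simpa using hlim
  exact ⟨_, (Complex.differentiableOn_dslope hs).2 hF,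
    (eqOn_dslope_sub_smul f c).mono fun z hz => hz.2⟩

end

/-- Let `T` be an invertible isometry of a complex Banach space `Y`, `y ∈ Y`, and let
`ξ₀` on the unit circle be an isolated singular point of the analytic function
`λ ↦ R(λ, T) y` (represented by `g`, analytic on `U \ {ξ₀}` and satisfying
`(λI - T) g(λ) = y` for `|λ| ≠ 1`).  If the radial limit condition
`lim_{s ↓ 1} (sξ₀ - ξ₀) R(sξ₀, T) y = 0` holds, then `ξ₀` is a removable singularity,
i.e. `g` extends analytically to all of `U`. -/
theorem removable_singularity_of_radial_limit
    {Y : Type*} [NormedAddCommGroup Y] [NormedSpace ℂ Y] [CompleteSpace Y]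
    (T : Y ≃ₗᵢ[ℂ] Y) (y : Y) (ξ₀ : ℂ) (hξ₀ : ‖ξ₀‖ = 1)
    (U : Set ℂ) (hU : IsOpen U) (hξU : ξ₀ ∈ U)
    (g : ℂ → Y) (hg : DifferentiableOn ℂ g (U \ {ξ₀}))
    (hres : ∀ l ∈ U \ {ξ₀}, ‖l‖ ≠ 1 → l • g l - T (g l) = y)
    (herg : Tendsto (fun s : ℝ => ((s : ℂ) * ξ₀ - ξ₀) • g ((s : ℂ) * ξ₀))
      (𝓝[>] (1 : ℝ)) (𝓝 0)) :
    ∃ h : ℂ → Y, DifferentiableOn ℂ h U ∧ ∀ l ∈ U \ {ξ₀}, h l = g l := by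
  have hξ₀0 : ξ₀ ≠ 0 := norm_ne_zero_iff.1 (by simp [hξ₀])
  have hbound : ∀ z ∈ U \ {ξ₀}, |‖z‖ - 1| * ‖g z‖ ≤ ‖y‖ := by
    intro z hz
    by_cases hz1 : ‖z‖ = 1
    · simp [hz1]
    · simpa [hres z hz hz1] using T.toLinearIsometry.abs_norm_sub_one_mul_norm_le z (g z)
  obtain ⟨r, hr, hrU⟩ := Metric.isOpen_iff.1 hU ξ₀ hξU
  have hpole := isBoundedUnder_norm_sub_smul_of_abs_norm_sub_one_mul_le hξ₀0 hr
    (hg.mono (sdiff_subset_sdiff_left hrU)) fun z hz => hbound z ⟨hrU hz.1, hz.2⟩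
  have hdiff : ∀ᶠ z in 𝓝[≠] ξ₀, DifferentiableAt ℂ (fun z => (z - ξ₀) • g z) z := by
    filter_upwards [sdiff_mem_nhdsWithin_compl (hU.mem_nhds hξU) {ξ₀}] with z hz
    exact (differentiableAt_id.sub_const ξ₀).smul
      (hg.differentiableAt ((hU.sdiff isClosed_singleton).mem_nhds hz))
  have hlim := Complex.tendsto_limUnder_of_differentiable_on_punctured_nhds_of_bounded_under
    hdiff (by simpa using hpole)
  have hlim0 := tendsto_nhds_unique (hlim.comp (Complex.tendsto_ofReal_mul_nhdsGT_one hξ₀0)) herg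
  exact exists_differentiableOn_eqOn_of_tendsto_sub_smul (hU.mem_nhds hξU) hg (hlim0 ▸ hlim)
end

section
/- Let T be an invertible isometry of a complex Banach space Y and y ∈ Y with σ(y) ⊆ {1}, where σ(y) is the circular spectrum of y with respect to T (the set of unit circle points at which λ ↦ R(λ, T)y has no local analytic extension). Then σ(Ty − y) = ∅, i.e., the local resolvent λ ↦ R(λ, T)(Ty − y) extends analytically across the entire unit circle; consequently Ty − y = 0. -/
/-!
Off the unit circle `|‖λ‖ - 1| ‖R(λ, T) z‖ ≤ ‖z‖`, because `T` is an invertible isometry. Gluing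
the local extensions, `λ ↦ R(λ, T) y` extends holomorphically to `ℂ \ {1}` with the same bound,
and a maximum modulus argument on small circles around `λ`, with a quadratic weight vanishing where
they cross the unit circle, shows that such a function has at most a simple pole at `1`. Hence
`R(λ, T) (T y - y) = (λ - 1) R(λ, T) y - y` extends to an entire function; it tends to `0` at
infinity, so it vanishes by Liouville's theorem, and then so does `T y - y`.
-/

open Filter Topology

noncomputable section

variable {Y : Type*} [NormedAddCommGroup Y] [NormedSpace ℂ Y]

/-- The circular spectrum `σ(y)` of `y` with respect to a bounded operator `T` : the set
of points `ξ` of the unit circle `Γ` such that `λ ↦ R(λ, T) y` has no analytic extension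
to any neighborhood of `ξ`. -/
def circularSpectrum (T : Y →L[ℂ] Y) (y : Y) : Set ℂ :=
  {ξ : ℂ | ‖ξ‖ = 1 ∧ ¬ ∃ U : Set ℂ, IsOpen U ∧ ξ ∈ U ∧ ∃ h : ℂ → Y,
    DifferentiableOn ℂ h U ∧ ∀ l ∈ U, ‖l‖ ≠ 1 → h l = resolvent T l y}

open Metric Set ComplexConjugate

theorem eqOn_limUnder_nhdsWithin {X Z : Type*} [TopologicalSpace X] [TopologicalSpace Z]
    [T2Space Z] [Nonempty Z] {s U : Set X} (hs : Dense s) (hU : IsOpen U) {f h : X → Z}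
    (hh : ContinuousOn h U) (hfh : ∀ x ∈ U, x ∈ s → h x = f x) :
    EqOn (fun x => limUnder (𝓝[s] x) f) h U := by
  intro x hx
  have := mem_closure_iff_nhdsWithin_neBot.1 (hs x)
  have hf : f =ᶠ[𝓝[s] x] h :=
    eventually_nhdsWithin_iff.2 <| mem_of_superset (hU.mem_nhds hx) fun l hlU hls =>
      (hfh l hlU hls).symm
  exact ((hh.continuousAt (hU.mem_nhds hx)).tendsto.mono_left nhdsWithin_le_nhds).congr'
    hf.symm |>.limUnder_eq

section Extension

variable {𝕜 E : Type*} [NontriviallyNormedField 𝕜] [NormedAddCommGroup E] [NormedSpace 𝕜 E]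
  {f : 𝕜 → E} {s : Set 𝕜} {x : 𝕜}

def HasDifferentiableExtensionAt (f : 𝕜 → E) (s : Set 𝕜) (x : 𝕜) : Prop :=
  ∃ U : Set 𝕜, IsOpen U ∧ x ∈ U ∧ ∃ h : 𝕜 → E,
    DifferentiableOn 𝕜 h U ∧ ∀ l ∈ U, l ∈ s → h l = f l

theorem hasDifferentiableExtensionAt_of_differentiableOn (hs : IsOpen s)
    (hf : DifferentiableOn 𝕜 f s) (hx : x ∈ s) : HasDifferentiableExtensionAt f s x :=
  ⟨s, hs, hx, f, hf, fun _ _ _ => rfl⟩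

namespace HasDifferentiableExtensionAt

theorem differentiableAt_limUnder (hs : Dense s) (hf : HasDifferentiableExtensionAt f s x) :
    DifferentiableAt 𝕜 (fun x => limUnder (𝓝[s] x) f) x := by
  obtain ⟨U, hU, hxU, h, hh, hfh⟩ := hf
  exact (hh.differentiableAt (hU.mem_nhds hxU)).congr_of_eventuallyEq <|
    eventually_of_mem (hU.mem_nhds hxU) (eqOn_limUnder_nhdsWithin hs hU hh.continuousOn hfh)

theorem limUnder_eq (hs : Dense s) (hf : HasDifferentiableExtensionAt f s x) (hx : x ∈ s) :
    limUnder (𝓝[s] x) f = f x := by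
  obtain ⟨U, hU, hxU, h, hh, hfh⟩ := hf
  exact (eqOn_limUnder_nhdsWithin hs hU hh.continuousOn hfh hxU).trans (hfh x hxU hx)

end HasDifferentiableExtensionAt

end Extension

section Resolvent

variable {𝕜 E : Type*} [NontriviallyNormedField 𝕜] [NormedAddCommGroup E] [NormedSpace 𝕜 E]

theorem abs_norm_sub_one_mul_norm_resolvent_apply_le {A : E →L[𝕜] E}
    (hA : ∀ x, ‖A x‖ = ‖x‖) (k : 𝕜) (z : E) :
    |‖k‖ - 1| * ‖resolvent A k z‖ ≤ ‖z‖ := by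
  by_cases hk : k ∈ resolventSet 𝕜 A
  · have hinv : (algebraMap 𝕜 (E →L[𝕜] E) k - A) * resolvent A k = 1 :=
      Ring.mul_inverse_cancel _ hk
    set x := resolvent A k z
    have hx : k • x - A x = z := by
      simpa [Algebra.algebraMap_eq_smul_one] using congr($hinv z)
    calc |‖k‖ - 1| * ‖x‖ = |‖k • x‖ - ‖A x‖| := by
          rw [norm_smul, hA, ← sub_one_mul, abs_mul, abs_norm]
      _ ≤ ‖z‖ := hx ▸ abs_norm_sub_norm_le _ _
  · simp [resolvent, Ring.inverse_non_unit _ hk]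

theorem resolvent_apply_sub_self {A : E →L[𝕜] E} {k : 𝕜} (hk : k ∈ resolventSet 𝕜 A) (y : E) :
    resolvent A k (A y - y) = (k - 1) • resolvent A k y - y := by
  have hinv : resolvent A k * (algebraMap 𝕜 (E →L[𝕜] E) k - A) = 1 :=
    Ring.inverse_mul_cancel _ hk
  have hy : A y - y = (k - 1) • y - (algebraMap 𝕜 (E →L[𝕜] E) k - A) y := by
    simp only [sub_apply, Algebra.algebraMap_eq_smul_one, smul_apply, one_apply_eq_self,
      sub_smul, one_smul]
    abel
  rw [hy, map_sub, map_smul, ← mul_apply_eq_comp, hinv, one_apply_eq_self]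

variable [CompleteSpace E]

theorem differentiableOn_resolvent_apply (A : E →L[𝕜] E) (z : E) :
    DifferentiableOn 𝕜 (fun k => resolvent A k z) (resolventSet 𝕜 A) := fun _ hk =>
  ((spectrum.hasDerivAt_resolvent_const_left hk).differentiableAt.clm_apply
    (differentiableAt_const z)).differentiableWithinAt

theorem LinearIsometryEquiv.spectrum_subset_sphere (T : E ≃ₗᵢ[𝕜] E) :
    spectrum 𝕜 T.toLinearIsometry.toContinuousLinearMap ⊆ sphere 0 1 := by
  have hle : ∀ S : E ≃ₗᵢ[𝕜] E, ∀ k ∈ spectrum 𝕜 S.toLinearIsometry.toContinuousLinearMap,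
      ‖k‖ ≤ 1 := fun S k hk =>
    (mem_closedBall_zero_iff.1 (spectrum.subset_closedBall_norm_mul _ hk)).trans <|
      mul_le_one₀ S.toLinearIsometry.norm_toContinuousLinearMap_le (norm_nonneg _)
        ContinuousLinearMap.norm_id_le
  set u := T.toContinuousLinearEquiv.toUnit
  intro k hk
  have hk0 : k ≠ 0 := fun h => (spectrum.zero_notMem_iff 𝕜).2 u.isUnit (h ▸ hk)
  have hkinv : k⁻¹ ∈ spectrum 𝕜 T.symm.toLinearIsometry.toContinuousLinearMap :=
    spectrum.map_inv (𝕜 := 𝕜) u ▸ Set.inv_mem_inv.2 hk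
  have := hle T.symm _ hkinv
  rw [norm_inv, inv_le_one₀ (norm_pos_iff.2 hk0)] at this
  exact mem_sphere_zero_iff_norm.2 (le_antisymm (hle T k hk) this)

theorem LinearIsometryEquiv.mem_resolventSet_of_norm_ne_one (T : E ≃ₗᵢ[𝕜] E) {k : 𝕜}
    (hk : ‖k‖ ≠ 1) : k ∈ resolventSet 𝕜 T.toLinearIsometry.toContinuousLinearMap :=
  spectrum.notMem_iff.1 fun h => hk (mem_sphere_zero_iff_norm.1 (T.spectrum_subset_sphere h))

end Resolvent

section ComplexAnalysis

variable {E : Type*} [NormedAddCommGroup E] [NormedSpace ℂ E]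

theorem Complex.exists_quadratic_eq_mul_sub_mul_sub {a : ℂ} (ha : a ≠ 0) (b c : ℂ) :
    ∃ w₁ w₂ : ℂ, ∀ w, a * w ^ 2 + b * w + c = a * ((w - w₁) * (w - w₂)) := by
  obtain ⟨w₁, hw₁⟩ :=
    exists_quadratic_eq_zero (b := b) (c := c) ha (IsAlgClosed.exists_eq_mul_self _)
  exact ⟨w₁, -b / a - w₁, fun w => by
    linear_combination hw₁ - (w - w₁) * mul_div_cancel₀ b ha⟩

theorem Complex.exists_norm_mul_sub_mul_sub_eq {c : ℂ} (hc : c ≠ 0) {s : ℝ} (hs : 0 < s) :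
    ∃ q₁ q₂ : ℂ, ‖(c - q₁) * (c - q₂)‖ = s ^ 2 ∧
      ∀ l ∈ sphere c s, ‖(l - q₁) * (l - q₂)‖ = s / ‖c‖ * |‖l‖ ^ 2 - 1| := by
  have ha : (s : ℂ) * conj c ≠ 0 := by simp [hs.ne', hc]
  -- writing `l = c + s w` with `‖w‖ = 1`, `(‖l‖ ^ 2 - 1) w` is this quadratic in `w`
  obtain ⟨w₁, w₂, hw⟩ := exists_quadratic_eq_mul_sub_mul_sub ha (‖c‖ ^ 2 + s ^ 2 - 1) (s * c)
  have hnorm_a : ‖(s : ℂ) * conj c‖ = s * ‖c‖ := by simp [abs_of_pos hs]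
  have hc0 : 0 < ‖c‖ := norm_pos_iff.2 hc
  refine ⟨c + s * w₁, c + s * w₂, ?_, fun l hl => ?_⟩
  · have hprod : ‖w₁ * w₂‖ = 1 := by
      have h0 : (s : ℂ) * conj c * (w₁ * w₂) = s * c := by linear_combination -(hw 0)
      have := congr(‖$h0‖)
      rw [norm_mul, hnorm_a, norm_mul (s : ℂ), Complex.norm_real, Real.norm_of_nonneg hs.le] at this
      exact mul_left_cancel₀ (by positivity) (this.trans (mul_one _).symm)
    rw [show (c - (c + s * w₁)) * (c - (c + s * w₂)) = (s : ℂ) ^ 2 * (w₁ * w₂) by ring,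
      norm_mul, norm_pow, Complex.norm_real, Real.norm_of_nonneg hs.le, hprod, mul_one]
  · set w := (l - c) / s
    have hw1 : ‖w‖ = 1 := by
      rw [norm_div, ← dist_eq_norm, mem_sphere.1 hl, Complex.norm_real,
        Real.norm_of_nonneg hs.le, div_self hs.ne']
    have hl : l = c + s * w := by
      rw [mul_div_cancel₀ _ (Complex.ofReal_ne_zero.2 hs.ne')]; ring
    have hquad : ((‖l‖ ^ 2 - 1 : ℝ) : ℂ) * w =
        s * conj c * w ^ 2 + (‖c‖ ^ 2 + s ^ 2 - 1) * w + s * c := by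
      have hww : w * conj w = 1 := by rw [Complex.mul_conj', hw1]; simp
      push_cast
      rw [← Complex.mul_conj', ← Complex.mul_conj', hl]
      simp only [map_add, map_mul, Complex.conj_ofReal]
      linear_combination (s * c + s ^ 2 * w) * hww
    have := congr(‖$hquad‖)
    rw [hw, norm_mul, norm_mul, hw1, mul_one, hnorm_a, Complex.norm_real, Real.norm_eq_abs] at this
    have hfac : (l - (c + s * w₁)) * (l - (c + s * w₂)) = (s : ℂ) ^ 2 * ((w - w₁) * (w - w₂)) := by
      rw [hl]; ring
    rw [hfac, norm_mul, norm_pow, Complex.norm_real, Real.norm_of_nonneg hs.le, this]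
    field_simp

/-- The weight `(l - q₁) (l - q₂)` vanishes where the circle `‖l - c‖ = s` crosses the unit
circle, which turns the bound on `g` into a uniform bound on the weighted function there. -/
theorem mul_norm_le_of_abs_norm_sub_one_mul_norm_le_on_sphere {g : ℂ → E} {c : ℂ} (hc : c ≠ 0)
    {s : ℝ} (hs : 0 < s) (hg : DiffContOnCl ℂ g (ball c s)) {C : ℝ}
    (hC : ∀ l ∈ sphere c s, |‖l‖ - 1| * ‖g l‖ ≤ C) :
    s * ‖c‖ * ‖g c‖ ≤ (‖c‖ + s + 1) * C := by
  obtain ⟨q₁, q₂, hq_center, hq_sphere⟩ := Complex.exists_norm_mul_sub_mul_sub_eq hc hs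
  have hc0 : 0 < ‖c‖ := norm_pos_iff.2 hc
  have hC0 : 0 ≤ C :=
    (mul_nonneg (abs_nonneg _) (norm_nonneg _)).trans (hC (c + s) (by simp [abs_of_pos hs]))
  have hQg : DiffContOnCl ℂ (fun l => ((l - q₁) * (l - q₂)) • g l) (ball c s) :=
    (by fun_prop : Differentiable ℂ fun l : ℂ => (l - q₁) * (l - q₂)).diffContOnCl.smul hg
  have hbound : ∀ l ∈ frontier (ball c s),
      ‖((l - q₁) * (l - q₂)) • g l‖ ≤ s / ‖c‖ * ((‖c‖ + s + 1) * C) := by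
    rw [frontier_ball c hs.ne']
    intro l hl
    have hl_norm : ‖l‖ ≤ ‖c‖ + s := norm_le_norm_add_const_of_dist_le (mem_sphere.1 hl).le
    have hsq : |‖l‖ ^ 2 - 1| = (‖l‖ + 1) * |‖l‖ - 1| := by
      rw [show ‖l‖ ^ 2 - 1 = (‖l‖ + 1) * (‖l‖ - 1) by ring, abs_mul,
        abs_of_pos (by positivity : 0 < ‖l‖ + 1)]
    calc ‖((l - q₁) * (l - q₂)) • g l‖ = s / ‖c‖ * ((‖l‖ + 1) * (|‖l‖ - 1| * ‖g l‖)) := by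
          rw [norm_smul, hq_sphere l hl, hsq]; ring
      _ ≤ s / ‖c‖ * ((‖c‖ + s + 1) * C) := by
          gcongr
          exact hC l hl
  have := Complex.norm_le_of_forall_mem_frontier_norm_le isBounded_ball hQg hbound
    (subset_closure (mem_ball_self hs))
  rw [norm_smul, hq_center] at this
  calc s * ‖c‖ * ‖g c‖ = ‖c‖ / s * (s ^ 2 * ‖g c‖) := by field_simp
    _ ≤ ‖c‖ / s * (s / ‖c‖ * ((‖c‖ + s + 1) * C)) := by gcongr
    _ = (‖c‖ + s + 1) * C := by field_simp

theorem norm_sub_smul_le_of_abs_norm_sub_one_mul_norm_le {g : ℂ → E} {ζ : ℂ} (hζ : ‖ζ‖ = 1)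
    (hg : DifferentiableOn ℂ g {ζ}ᶜ) {C : ℝ} (hC : ∀ l, |‖l‖ - 1| * ‖g l‖ ≤ C) {l : ℂ}
    (hl : ‖l - ζ‖ < 1 / 2) : ‖(l - ζ) • g l‖ ≤ 12 * C := by
  have hC0 : 0 ≤ C := (mul_nonneg (abs_nonneg _) (norm_nonneg _)).trans (hC l)
  rcases eq_or_ne l ζ with rfl | hlζ
  · simpa using hC0
  set s := ‖l - ζ‖ / 2 with hs_def
  have hs : 0 < s := by positivity [sub_ne_zero.2 hlζ]
  obtain ⟨hl_lower, hl_upper⟩ := abs_lt.1 (hζ ▸ (abs_norm_sub_norm_le l ζ).trans_lt hl)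
  have hball : closedBall l s ⊆ {ζ}ᶜ := fun x hx hxζ => by
    rw [mem_singleton_iff.1 hxζ, mem_closedBall, dist_comm, dist_eq_norm] at hx
    linarith
  have key := mul_norm_le_of_abs_norm_sub_one_mul_norm_le_on_sphere
    (ne_zero_of_norm_ne_zero (by linarith : ‖l‖ ≠ 0)) hs (hg.diffContOnCl_ball hball)
    (fun x _ => hC x)
  rw [norm_smul, show ‖l - ζ‖ = 2 * s by ring]
  nlinarith [mul_nonneg (by linarith : (0 : ℝ) ≤ ‖l‖ - 1 / 2)
      (mul_nonneg hs.le (norm_nonneg (g l))),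
    mul_nonneg (by linarith : (0 : ℝ) ≤ 11 / 4 - ‖l‖ - s) hC0]

theorem Complex.differentiable_update_limUnder_of_bddAbove [CompleteSpace E] {f : ℂ → E} {c : ℂ}
    {s : Set ℂ} (hs : s ∈ 𝓝 c) (hd : DifferentiableOn ℂ f {c}ᶜ)
    (hb : BddAbove (norm ∘ f '' (s \ {c}))) :
    Differentiable ℂ (Function.update f c (limUnder (𝓝[≠] c) f)) := by
  intro x
  rcases eq_or_ne x c with rfl | hxc
  · exact (Complex.differentiableOn_update_limUnder_of_bddAbove hs
      (hd.mono fun _ h => h.2) hb).differentiableAt hs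
  · exact (hd.differentiableAt (isOpen_compl_singleton.mem_nhds hxc)).congr_of_eventuallyEq
      (eventually_of_mem (isOpen_compl_singleton.mem_nhds hxc) fun _ hy =>
        Function.update_of_ne hy _ _)

end ComplexAnalysis

theorem dense_setOf_norm_ne_one : Dense {l : ℂ | ‖l‖ ≠ 1} := by
  convert interior_eq_empty_iff_dense_compl.1 (interior_sphere (0 : ℂ) one_ne_zero) using 1
  ext; simp

theorem eq_zero_of_differentiable_eventuallyEq_resolvent_apply {E : Type*}
    [NormedAddCommGroup E] [NormedSpace ℂ E] [CompleteSpace E] {A : E →L[ℂ] E} {z : E}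
    {H : ℂ → E} (hH : Differentiable ℂ H)
    (hHz : ∀ᶠ l in Bornology.cobounded ℂ, H l = resolvent A l z) : z = 0 := by
  have hlim : Tendsto H (cocompact ℂ) (𝓝 0) := by
    rw [← cobounded_eq_cocompact]
    simpa using (((ContinuousLinearMap.apply ℂ E z).continuous.tendsto 0).comp
      (spectrum.resolvent_tendsto_cobounded A)).congr' (hHz.mono fun _ h => h.symm)
  obtain ⟨l, hl, hlρ⟩ := (hHz.and <| (tendsto_norm_cobounded_atTop.eventually_gt_atTop
    (‖A‖ * ‖(1 : E →L[ℂ] E)‖)).mono fun _ h => spectrum.mem_resolventSet_of_norm_lt_mul h).exists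
  have hinv : (algebraMap ℂ (E →L[ℂ] E) l - A) * resolvent A l = 1 :=
    Ring.mul_inverse_cancel _ hlρ
  rw [← one_apply_eq_self (F := E →L[ℂ] E) z, ← hinv, mul_apply_eq_comp, ← hl,
    hH.apply_eq_of_tendsto_cocompact l hlim, map_zero]

theorem circularSpectrum_eq_empty_of_differentiable {A : Y →L[ℂ] Y} {z : Y} {H : ℂ → Y}
    (hH : Differentiable ℂ H) (hHz : ∀ l : ℂ, ‖l‖ ≠ 1 → H l = resolvent A l z) :
    circularSpectrum A z = ∅ :=
  eq_empty_iff_forall_notMem.2 fun ξ hξ =>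
    hξ.2 ⟨univ, isOpen_univ, mem_univ ξ, H, hH.differentiableOn, fun l _ => hHz l⟩

section

variable [CompleteSpace Y]

theorem exists_differentiableOn_eq_resolvent_apply_of_circularSpectrum_subset
    (T : Y ≃ₗᵢ[ℂ] Y) {y : Y} {ζ : ℂ}
    (hspec : circularSpectrum T.toLinearIsometry.toContinuousLinearMap y ⊆ {ζ}) :
    ∃ G : ℂ → Y, DifferentiableOn ℂ G {ζ}ᶜ ∧
      ∀ l : ℂ, ‖l‖ ≠ 1 → G l = resolvent T.toLinearIsometry.toContinuousLinearMap l y := by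
  set A := T.toLinearIsometry.toContinuousLinearMap
  set S := {l : ℂ | ‖l‖ ≠ 1}
  have hext : ∀ ξ, ξ ∉ circularSpectrum A y →
      HasDifferentiableExtensionAt (fun l => resolvent A l y) S ξ := by
    intro ξ hξ
    by_cases hξS : ξ ∈ S
    · exact hasDifferentiableExtensionAt_of_differentiableOn
        (isOpen_ne_fun continuous_norm continuous_const)
        ((differentiableOn_resolvent_apply A y).mono fun _ => T.mem_resolventSet_of_norm_ne_one)
        hξS
    · exact not_not.1 fun h => hξ ⟨not_not.1 hξS, h⟩
  refine ⟨fun x => limUnder (𝓝[S] x) (fun l => resolvent A l y),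
    fun ξ hξ => ((hext ξ fun h => hξ (hspec h)).differentiableAt_limUnder
      dense_setOf_norm_ne_one).differentiableWithinAt,
    fun l hl => (hext l fun h => hl h.1).limUnder_eq dense_setOf_norm_ne_one hl⟩

theorem exists_differentiable_eq_resolvent_apply_sub_self (T : Y ≃ₗᵢ[ℂ] Y) {y : Y}
    (hspec : circularSpectrum T.toLinearIsometry.toContinuousLinearMap y ⊆ {1}) :
    ∃ H : ℂ → Y, Differentiable ℂ H ∧ ∀ l : ℂ, ‖l‖ ≠ 1 →
      H l = resolvent T.toLinearIsometry.toContinuousLinearMap l (T y - y) := by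
  obtain ⟨G, hGd, hGy⟩ :=
    exists_differentiableOn_eq_resolvent_apply_of_circularSpectrum_subset T hspec
  have hG_bound : ∀ l, |‖l‖ - 1| * ‖G l‖ ≤ ‖y‖ := fun l => by
    by_cases hl : ‖l‖ = 1
    · simp [hl]
    · exact hGy l hl ▸ abs_norm_sub_one_mul_norm_resolvent_apply_le T.norm_map l y
  set F : ℂ → Y := fun l => (l - 1) • G l - y
  refine ⟨Function.update F 1 (limUnder (𝓝[≠] 1) F),
    Complex.differentiable_update_limUnder_of_bddAbove (ball_mem_nhds 1 one_half_pos)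
      (fun l hl => ((differentiableWithinAt_id.sub_const 1).smul (hGd l hl)).sub_const y)
      ⟨12 * ‖y‖ + ‖y‖, ?_⟩, fun l hl => ?_⟩
  · rintro _ ⟨l, ⟨hl, -⟩, rfl⟩
    exact norm_sub_le_of_le (norm_sub_smul_le_of_abs_norm_sub_one_mul_norm_le norm_one hGd
      hG_bound (dist_eq_norm l 1 ▸ hl)) le_rfl
  · rw [Function.update_of_ne (fun h => hl (by rw [h, norm_one]))]
    show (l - 1) • G l - y = _
    rw [hGy l hl]
    exact (resolvent_apply_sub_self (T.mem_resolventSet_of_norm_ne_one hl) y).symm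

end

/-- Katznelson–Tsafriri type theorem for invertible isometries: if `T` is an invertible
isometry of a complex Banach space `Y` and `y ∈ Y` has circular spectrum `σ(y) ⊆ {1}`,
then `σ(Ty - y) = ∅`, i.e. the local resolvent `λ ↦ R(λ, T)(Ty - y)` extends
analytically across the entire unit circle; consequently `Ty - y = 0`. -/
theorem spectrum_in_one_implies_fixed
    [CompleteSpace Y] (T : Y ≃ₗᵢ[ℂ] Y) (y : Y)
    (hspec : circularSpectrum T.toLinearIsometry.toContinuousLinearMap y ⊆ {1}) :
    circularSpectrum T.toLinearIsometry.toContinuousLinearMap (T y - y) = ∅ ∧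
    T y - y = 0 := by
  obtain ⟨H, hH, hHz⟩ := exists_differentiable_eq_resolvent_apply_sub_self T hspec
  exact ⟨circularSpectrum_eq_empty_of_differentiable hH hHz,
    eq_zero_of_differentiable_eventuallyEq_resolvent_apply hH <|
      (tendsto_norm_cobounded_atTop.eventually_gt_atTop 1).mono fun l hl => hHz l hl.ne'⟩
end
end
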